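/- Let p be prime and k a field of characteristic p. Let 0 ≤ a < p − 1 and let D(a) ∈ M_{2p}(k[s,t]) be the block upper-triangular matrix [[B(2p−a−2), D'(a)],[0, B(a)†]], where B(μ) is the tridiagonal matrix with (i,j) entry −i t² if i=j+1, (μ−2i)st if i=j, (μ−i)s² if i=j−1; D'(a) is the (2p−a−1)×(a+1) matrix with (i,j) entry (1/(i+1))·s² if i − j = p − a − 2, (1/(a+1))·t² if (i,j) = (p, a), and 0 otherwise; and B(a)† is obtained from B(a) by transposing and swapping s and t. Then the inclusion of k[s,t]^{2p−a−1} into k[s,t]^{2p} as the top coordinates induces an isomorphism ker B(2p−a−2) ≅ ker D(a). -/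

import Mathlib

/-!
Split a kernel vector of `D(a)` as `(u, v)` along the blocks `B(2p−a−2)` and `B(a)†`; it suffices
to show `v = 0`. In characteristic `p`, the coefficient vector `m` of `x^p (s x + t)^(p−a−2)` is a
left null vector of `B(2p−a−2)`: the binomial coefficients satisfy the two-term recurrence
`mᵢ (2p−a−2−i) s = mᵢ₊₁ (i+1) t`, which survives the shift by `x^p` because `p = 0` in `k`.
Pairing `m` with `B u + D' v = 0` kills `u`, and `m D'` is `t^(p−a)/(a+1)` at the last column
and zero elsewhere, so `v_a = 0`. Finally `B(a)† v = 0` is triangular from the bottom: once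
`v_{r+1} = v_{r+2} = 0`, row `r + 1` reads `(a − r) t² v_r = 0`, and `a − r` is a unit as `a < p`.
-/

open MvPolynomial

variable (k : Type*) [Field k]

/-- The `(I,J)` entry of the tridiagonal matrix `B(μ)` over `k[s,t]` (`s = X 0`, `t = X 1`):
`−I·t²` if `I = J+1`, `(μ−2I)·st` if `I = J`, `(μ−I)·s²` if `J = I+1`. -/
noncomputable def bEntry (μ I J : ℕ) : MvPolynomial (Fin 2) k :=
  if I = J + 1 then ((-(I : ℤ) : ℤ) : MvPolynomial (Fin 2) k) * X 1 ^ 2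
  else if I = J then (((μ : ℤ) - 2 * I : ℤ) : MvPolynomial (Fin 2) k) * (X 0 * X 1)
  else if J = I + 1 then (((μ : ℤ) - I : ℤ) : MvPolynomial (Fin 2) k) * X 0 ^ 2
  else 0

/-- The `(I,J)` entry of `B(a)†`, the transpose of `B(a)` with the variables `s` and `t`
swapped. -/
noncomputable def bDagEntry (a I J : ℕ) : MvPolynomial (Fin 2) k :=
  if J = I + 1 then ((-(J : ℤ) : ℤ) : MvPolynomial (Fin 2) k) * X 0 ^ 2
  else if I = J then (((a : ℤ) - 2 * I : ℤ) : MvPolynomial (Fin 2) k) * (X 0 * X 1)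
  else if I = J + 1 then (((a : ℤ) - J : ℤ) : MvPolynomial (Fin 2) k) * X 1 ^ 2
  else 0

/-- The `(λ+1)×(λ+1)` matrix `B(λ)` over `k[s,t]`. -/
noncomputable def Bmat (l : ℕ) :
    Matrix (Fin (l + 1)) (Fin (l + 1)) (MvPolynomial (Fin 2) k) :=
  Matrix.of fun i j => bEntry k l (i : ℕ) (j : ℕ)

/-- The block matrix `D(a) = [[B(2p−a−2), D'(a)], [0, B(a)†]]` of size `2p`, where the
`(i, j')` entry of `D'(a)` is `s²/(i+1)` if `i − j' = p − a − 2`, `t²/(a+1)` if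
`(i, j') = (p, a)`, and `0` otherwise. -/
noncomputable def Dmat (p a : ℕ) :
    Matrix (Fin (2 * p)) (Fin (2 * p)) (MvPolynomial (Fin 2) k) :=
  Matrix.of fun i j =>
    if (i : ℕ) < 2 * p - a - 2 + 1 then
      if (j : ℕ) < 2 * p - a - 2 + 1 then bEntry k (2 * p - a - 2) (i : ℕ) (j : ℕ)
      else
        if (i : ℕ) = ((j : ℕ) - (2 * p - a - 2 + 1)) + (p - a - 2) then
          MvPolynomial.C ((((i : ℕ) + 1 : ℕ) : k))⁻¹ * X 0 ^ 2
        else if (i : ℕ) = p ∧ (j : ℕ) - (2 * p - a - 2 + 1) = a then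
          MvPolynomial.C (((a + 1 : ℕ) : k))⁻¹ * X 1 ^ 2
        else 0
    else
      if (j : ℕ) < 2 * p - a - 2 + 1 then 0
      else bDagEntry k a ((i : ℕ) - (2 * p - a - 2 + 1)) ((j : ℕ) - (2 * p - a - 2 + 1))

/-- The inclusion of `k[s,t]^{2p−a−1}` into `k[s,t]^{2p}` as the top coordinates. -/
noncomputable def pad (p a : ℕ) :
    (Fin (2 * p - a - 2 + 1) → MvPolynomial (Fin 2) k) →ₗ[MvPolynomial (Fin 2) k]
      (Fin (2 * p) → MvPolynomial (Fin 2) k) :=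
  LinearMap.pi fun i : Fin (2 * p) =>
    if h : (i : ℕ) < 2 * p - a - 2 + 1 then LinearMap.proj (⟨(i : ℕ), h⟩ : Fin (2 * p - a - 2 + 1))
    else 0

open Matrix

namespace Matrix

variable {R : Type*} [CommRing R] {l m n o ι κ : Type*} [Fintype m] [Fintype n] [Fintype κ]

theorem ker_mulVecLin_submatrix_equiv (M : Matrix l m R) (e₁ : ι ≃ l) (e₂ : κ ≃ m) :
    LinearMap.ker (M.submatrix e₁ e₂).mulVecLin
      = (LinearMap.ker M.mulVecLin).map (LinearMap.funLeft R R e₂) := by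
  ext x
  simp only [LinearMap.mem_ker, mulVecLin_apply, submatrix_mulVec_equiv, Submodule.mem_map]
  constructor
  · intro hx
    refine ⟨x ∘ e₂.symm, funext fun j => ?_, by ext; simp [LinearMap.funLeft_apply]⟩
    simpa using congrFun hx (e₁.symm j)
  · rintro ⟨y, hy, rfl⟩
    simp [LinearMap.funLeft, Function.comp_assoc, hy]

theorem ker_mulVecLin_fromBlocks_zero (A : Matrix l m R) (B : Matrix l n R) (D : Matrix o n R)
    (h : ∀ u v, A *ᵥ u + B *ᵥ v = 0 → D *ᵥ v = 0 → v = 0) :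
    LinearMap.ker (fromBlocks A B 0 D).mulVecLin
      = (LinearMap.ker A.mulVecLin).map Sum.elimZeroRight := by
  ext x
  simp only [LinearMap.mem_ker, mulVecLin_apply, fromBlocks_mulVec, Submodule.mem_map,
    zero_mulVec, zero_add, ← Sum.elim_zero_zero, Sum.elim_eq_iff]
  constructor
  · rintro ⟨htop, hbot⟩
    have hinr : x ∘ Sum.inr = 0 := h _ _ htop hbot
    refine ⟨x ∘ Sum.inl, by simpa [hinr] using htop, ?_⟩
    ext (i | i)
    · rfl
    · exact (congrFun hinr i).symm
  · rintro ⟨u, hu, rfl⟩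
    have hinl : (Sum.elimZeroRight (κ := n) u) ∘ Sum.inl = u := rfl
    have hinr : (Sum.elimZeroRight (κ := n) u) ∘ Sum.inr = 0 := rfl
    simp only [hinl, hinr, hu, mulVec_zero, add_zero, and_self]

theorem vecMul_dotProduct_eq_zero [Fintype l] {A : Matrix l m R} {B : Matrix l n R} {w : l → R}
    (hw : w ᵥ* A = 0) {u : m → R} {v : n → R} (h : A *ᵥ u + B *ᵥ v = 0) :
    (w ᵥ* B) ⬝ᵥ v = 0 := by
  have h' := congrArg (w ⬝ᵥ ·) h
  simpa [dotProduct_add, dotProduct_mulVec, hw] using h'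

end Matrix

def finSumFinEquivOfEq {n m l : ℕ} (h : n = m + l) : Fin n ≃ Fin m ⊕ Fin l :=
  (finCongr h).trans finSumFinEquiv.symm

theorem finSumFinEquivOfEq_apply {n m l : ℕ} (h : n = m + l) (i : Fin n) :
    finSumFinEquivOfEq h i
      = if hi : (i : ℕ) < m then Sum.inl ⟨i, hi⟩ else Sum.inr ⟨i - m, by omega⟩ := by
  unfold finSumFinEquivOfEq
  split_ifs with hi
  · have : finCongr h i = Fin.castAdd l ⟨i, hi⟩ := rfl
    rw [Equiv.trans_apply, this, finSumFinEquiv_symm_apply_castAdd]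
  · have : finCongr h i = Fin.natAdd m ⟨i - m, by omega⟩ := Fin.ext (by simp; omega)
    rw [Equiv.trans_apply, this, finSumFinEquiv_symm_apply_natAdd]

theorem natCast_ne_zero_of_pos_of_lt {R : Type*} [AddMonoidWithOne R] {p n : ℕ} [CharP R p]
    (h0 : 0 < n) (hn : n < p) : (n : R) ≠ 0 := fun h =>
  absurd (Nat.le_of_dvd h0 ((CharP.cast_eq_zero_iff R p n).1 h)) (by omega)

theorem Finset.sum_range_eq_add_add {M : Type*} [AddCommMonoid M] {n j : ℕ} {g : ℕ → M}
    (hn : ∀ i, n ≤ i → g i = 0) (hj : ∀ i, i ≠ j → i ≠ j + 1 → i ≠ j + 2 → g i = 0) :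
    ∑ i ∈ Finset.range n, g i = g j + g (j + 1) + g (j + 2) := by
  have hrange : Function.support g ⊆ ↑(Finset.range n) := fun i hi => by
    by_contra h
    exact hi (hn i (by simpa using h))
  have hwindow : Function.support g ⊆ ↑({j, j + 1, j + 2} : Finset ℕ) := fun i hi => by
    by_contra h
    simp only [Finset.coe_insert, Finset.coe_singleton, Set.mem_insert_iff,
      Set.mem_singleton_iff, not_or] at h
    exact hi (hj i h.1 h.2.1 h.2.2)
  rw [← finsum_eq_sum_of_support_subset g hrange, finsum_eq_sum_of_support_subset g hwindow]
  simp [add_assoc]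

theorem choose_mul_pow_mul_pow_recurrence {R : Type*} [CommRing R] (s t : R) (n q : ℕ) :
    (n.choose q : R) * s ^ q * t ^ (n - q) * ((n : R) - q) * s
      = (n.choose (q + 1) : R) * s ^ (q + 1) * t ^ (n - (q + 1)) * ((q : R) + 1) * t := by
  rcases lt_or_ge q n with hq | hq
  · have hchoose : (n.choose (q + 1) : R) * ((q : R) + 1) = n.choose q * ((n : R) - q) := by
      have h := congrArg (Nat.cast : ℕ → R) (Nat.choose_succ_right_eq n q)
      push_cast [Nat.cast_sub hq.le] at h
      exact h
    rw [show n - q = n - (q + 1) + 1 by omega]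
    linear_combination -(s ^ (q + 1) * t ^ (n - (q + 1)) * t) * hchoose
  · rw [Nat.choose_eq_zero_of_lt (by omega : n < q + 1)]
    rcases hq.eq_or_lt with rfl | hq
    · simp
    · simp [Nat.choose_eq_zero_of_lt hq]

noncomputable def BdagMat (a : ℕ) :
    Matrix (Fin (a + 1)) (Fin (a + 1)) (MvPolynomial (Fin 2) k) :=
  Matrix.of fun i j => bDagEntry k a i j

noncomputable def DprimeMat (p a : ℕ) :
    Matrix (Fin (2 * p - a - 2 + 1)) (Fin (a + 1)) (MvPolynomial (Fin 2) k) :=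
  Matrix.of fun i j =>
    if (i : ℕ) = j + (p - a - 2) then C (((i : ℕ) + 1 : ℕ) : k)⁻¹ * X 0 ^ 2
    else if (i : ℕ) = p ∧ (j : ℕ) = a then C ((a + 1 : ℕ) : k)⁻¹ * X 1 ^ 2
    else 0

/-- The coefficient of `x ^ i` in `x ^ p * (s * x + t) ^ n`. -/
noncomputable def leftNullVec (p n : ℕ) : ℕ → MvPolynomial (Fin 2) k := fun i =>
  if p ≤ i then (n.choose (i - p) : MvPolynomial (Fin 2) k) * X 0 ^ (i - p) * X 1 ^ (n - (i - p))
  else 0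

theorem Dmat_eq_submatrix_fromBlocks {p a : ℕ} (h : 2 * p = (2 * p - a - 2 + 1) + (a + 1)) :
    Dmat k p a = (fromBlocks (Bmat k (2 * p - a - 2)) (DprimeMat k p a) 0
      (BdagMat k a)).submatrix (finSumFinEquivOfEq h) (finSumFinEquivOfEq h) := by
  ext i j : 1
  simp only [Dmat, submatrix_apply, finSumFinEquivOfEq_apply, of_apply]
  by_cases hi : (i : ℕ) < 2 * p - a - 2 + 1 <;> by_cases hj : (j : ℕ) < 2 * p - a - 2 + 1 <;>
    simp only [hi, hj, dite_true, dite_false, if_true, if_false, fromBlocks_apply₁₁,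
      fromBlocks_apply₁₂, fromBlocks_apply₂₁, fromBlocks_apply₂₂] <;> rfl

theorem pad_eq_funLeft_comp {p a : ℕ} (h : 2 * p = (2 * p - a - 2 + 1) + (a + 1)) :
    pad k p a = LinearMap.funLeft _ _ (finSumFinEquivOfEq h) ∘ₗ Sum.elimZeroRight := by
  ext v i
  simp only [pad, LinearMap.pi_apply, LinearMap.coe_comp, Function.comp_apply,
    LinearMap.funLeft_apply, Sum.elimZeroRight_apply, finSumFinEquivOfEq_apply]
  split_ifs <;> rfl

section

variable {k}

theorem bEntry_succ_self (μ J : ℕ) :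
    bEntry k μ (J + 1) J = -((J : MvPolynomial (Fin 2) k) + 1) * X 1 ^ 2 := by
  simp [bEntry]

theorem bEntry_self (μ J : ℕ) :
    bEntry k μ J J
      = ((μ : MvPolynomial (Fin 2) k) - 2 * (J : MvPolynomial (Fin 2) k)) * (X 0 * X 1) := by
  simp [bEntry]

theorem bEntry_self_succ (μ J : ℕ) :
    bEntry k μ J (J + 1)
      = ((μ : MvPolynomial (Fin 2) k) - (J : MvPolynomial (Fin 2) k)) * X 0 ^ 2 := by
  simp [bEntry, show J ≠ J + 1 + 1 by omega]

theorem bEntry_eq_zero {μ I J : ℕ} (h₁ : I ≠ J + 1) (h₂ : I ≠ J) (h₃ : J ≠ I + 1) :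
    bEntry k μ I J = 0 := by
  simp [bEntry, h₁, h₂, h₃]

theorem bDagEntry_succ_self (a J : ℕ) :
    bDagEntry k a (J + 1) J
      = ((a : MvPolynomial (Fin 2) k) - (J : MvPolynomial (Fin 2) k)) * X 1 ^ 2 := by
  simp [bDagEntry, show J ≠ J + 1 + 1 by omega]

theorem bDagEntry_eq_zero {a I J : ℕ} (h₁ : J ≠ I + 1) (h₂ : I ≠ J) (h₃ : I ≠ J + 1) :
    bDagEntry k a I J = 0 := by
  simp [bDagEntry, h₁, h₂, h₃]

theorem vecMul_Bmat_eq_zero {N : ℕ} {m : ℕ → MvPolynomial (Fin 2) k}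
    (hrec : ∀ i : ℕ, m i * ((N : MvPolynomial (Fin 2) k) - (i : MvPolynomial (Fin 2) k)) * X 0
      = m (i + 1) * ((i : MvPolynomial (Fin 2) k) + 1) * X 1)
    (hvan : ∀ i, N < i → m i = 0) :
    (fun i : Fin (N + 1) => m i) ᵥ* Bmat k N = 0 := by
  funext ⟨j, hj⟩
  simp only [vecMul, dotProduct, Bmat, of_apply, Pi.zero_apply]
  rw [Fin.sum_univ_eq_sum_range (fun i => m i * bEntry k N i j) (N + 1)]
  have hvan' : ∀ i, N + 1 ≤ i → m i * bEntry k N i j = 0 := fun i hi => by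
    rw [hvan i (by omega), zero_mul]
  cases j with
  | zero =>
    rw [Finset.sum_range_eq_add_add hvan' fun i h₀ h₁ h₂ => by
      rw [bEntry_eq_zero (by omega) h₀ (by omega), mul_zero]]
    rw [bEntry_self, bEntry_succ_self,
      bEntry_eq_zero (I := 0 + 2) (by omega) (by omega) (by omega)]
    linear_combination X 1 * hrec 0
  | succ j =>
    rw [Finset.sum_range_eq_add_add (j := j) hvan' fun i h₀ h₁ h₂ => by
      rw [bEntry_eq_zero (by omega) h₁ (by omega), mul_zero]]
    rw [bEntry_self_succ, bEntry_self, bEntry_succ_self]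
    have hrec' := hrec (j + 1)
    push_cast at hrec' ⊢
    linear_combination X 0 * hrec j + X 1 * hrec'

theorem leftNullVec_eq_zero_of_lt {p n i : ℕ} (h : p + n < i) : leftNullVec k p n i = 0 := by
  simp [leftNullVec, Nat.choose_eq_zero_of_lt (by omega : n < i - p)]

theorem leftNullVec_recurrence {p n : ℕ} [CharP k p] (i : ℕ) :
    leftNullVec k p n i * (((p + n : ℕ) : MvPolynomial (Fin 2) k) - (i : MvPolynomial (Fin 2) k))
        * X 0
      = leftNullVec k p n (i + 1) * ((i : MvPolynomial (Fin 2) k) + 1) * X 1 := by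
  have hp : (p : MvPolynomial (Fin 2) k) = 0 := CharP.cast_eq_zero _ p
  rcases lt_or_ge i p with hi | hi
  · rcases (Nat.succ_le_of_lt hi).lt_or_eq with hi' | hi'
    · simp [leftNullVec, Nat.not_le.2 hi, Nat.not_le.2 hi']
    · have hcast : (i : MvPolynomial (Fin 2) k) + 1 = 0 := by exact_mod_cast hi' ▸ hp
      simp [leftNullVec, Nat.not_le.2 hi, hcast]
  · obtain ⟨q, rfl⟩ := Nat.exists_eq_add_of_le hi
    have h := choose_mul_pow_mul_pow_recurrence (X 0 : MvPolynomial (Fin 2) k) (X 1) n q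
    simp only [leftNullVec]
    rw [if_pos (by omega), if_pos (by omega), show p + q + 1 - p = q + 1 by omega,
      Nat.add_sub_cancel_left]
    push_cast
    linear_combination h - ((n.choose (q + 1) : MvPolynomial (Fin 2) k) * X 0 ^ (q + 1)
      * X 1 ^ (n - (q + 1)) * X 1) * hp

theorem leftNullVec_vecMul_Bmat {p n N : ℕ} [CharP k p] (hN : N = p + n) :
    (fun i : Fin (N + 1) => leftNullVec k p n i) ᵥ* Bmat k N = 0 := by
  subst hN
  exact vecMul_Bmat_eq_zero leftNullVec_recurrence fun _ => leftNullVec_eq_zero_of_lt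

theorem leftNullVec_vecMul_DprimeMat {p a : ℕ} (hap : a + 2 ≤ p) :
    (fun i : Fin (2 * p - a - 2 + 1) => leftNullVec k p (p - a - 2) i) ᵥ* DprimeMat k p a
      = Pi.single (Fin.last a) (X 1 ^ (p - a - 2) * (C ((a + 1 : ℕ) : k)⁻¹ * X 1 ^ 2)) := by
  funext j
  simp only [vecMul, dotProduct, DprimeMat, of_apply]
  rw [Finset.sum_eq_single_of_mem ⟨p, by omega⟩ (Finset.mem_univ _) fun i _ hi => ?_]
  · have hj : p ≠ (j : ℕ) + (p - a - 2) := by omega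
    simp only [leftNullVec, le_refl, if_true, Nat.sub_self, Nat.choose_zero_right, Nat.cast_one,
      pow_zero, one_mul, Nat.sub_zero, if_neg hj, true_and]
    by_cases hja : j = Fin.last a
    · subst hja
      simp
    · rw [Pi.single_eq_of_ne hja, if_neg (fun h => hja (Fin.ext (by simpa using h))), mul_zero]
  · have hi' : (i : ℕ) ≠ p := fun h => hi (Fin.ext h)
    rcases lt_or_gt_of_ne hi' with hlt | hgt
    · simp [leftNullVec, Nat.not_le.2 hlt]
    · rw [if_neg (by omega), if_neg (fun h => hi' h.1), mul_zero]

theorem BdagMat_mulVec_apply_succ {a r : ℕ} (hr : r < a)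
    {v : Fin (a + 1) → MvPolynomial (Fin 2) k}
    (hzero : ∀ j : Fin (a + 1), r < j → v j = 0) :
    (BdagMat k a *ᵥ v) ⟨r + 1, by omega⟩
      = ((a : MvPolynomial (Fin 2) k) - (r : MvPolynomial (Fin 2) k)) * X 1 ^ 2
        * v ⟨r, by omega⟩ := by
  simp only [mulVec, dotProduct, BdagMat, of_apply]
  rw [Finset.sum_eq_single_of_mem ⟨r, by omega⟩ (Finset.mem_univ _) fun j _ hj => ?_]
  · rw [bDagEntry_succ_self]
  · have hj' : (j : ℕ) ≠ r := fun h => hj (Fin.ext h)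
    rcases lt_or_gt_of_ne hj' with hlt | hgt
    · rw [bDagEntry_eq_zero (by omega) (by omega) (by omega), zero_mul]
    · rw [hzero j hgt, mul_zero]

theorem eq_zero_of_BdagMat_mulVec_eq_zero {p a : ℕ} [CharP k p] (hap : a < p)
    {v : Fin (a + 1) → MvPolynomial (Fin 2) k} (hv : BdagMat k a *ᵥ v = 0)
    (hlast : v (Fin.last a) = 0) : v = 0 := by
  suffices h : ∀ d, ∀ j : Fin (a + 1), a - d ≤ j → v j = 0 from
    funext fun j => h a j (by omega)
  intro d
  induction d with
  | zero =>
    intro j hj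
    rw [show j = Fin.last a from Fin.ext (by simp; omega), hlast]
  | succ d ih =>
    intro j hj
    by_cases hjd : a - d ≤ j
    · exact ih j hjd
    have hrow := BdagMat_mulVec_apply_succ (k := k) (show (j : ℕ) < a by omega)
      fun i hi => ih i (by omega)
    rw [hv, ← Nat.cast_sub (by omega)] at hrow
    have hcoeff : ((a - j : ℕ) : MvPolynomial (Fin 2) k) ≠ 0 :=
      natCast_ne_zero_of_pos_of_lt (p := p) (by omega) (by omega)
    simpa [hcoeff, X_ne_zero] using hrow.symm

theorem Dmat_kernel_bottom_eq_zero {p a : ℕ} [CharP k p] (hap : a + 2 ≤ p)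
    (u : Fin (2 * p - a - 2 + 1) → MvPolynomial (Fin 2) k)
    (v : Fin (a + 1) → MvPolynomial (Fin 2) k)
    (h₁ : Bmat k (2 * p - a - 2) *ᵥ u + DprimeMat k p a *ᵥ v = 0) (h₂ : BdagMat k a *ᵥ v = 0) :
    v = 0 := by
  refine eq_zero_of_BdagMat_mulVec_eq_zero (p := p) (by omega) h₂ ?_
  have h := vecMul_dotProduct_eq_zero (leftNullVec_vecMul_Bmat (p := p)
    (show 2 * p - a - 2 = p + (p - a - 2) by omega)) h₁
  rw [leftNullVec_vecMul_DprimeMat hap, single_dotProduct] at h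
  have hinv : (C ((a + 1 : ℕ) : k)⁻¹ : MvPolynomial (Fin 2) k) ≠ 0 := by
    rw [Ne, C_eq_zero, inv_eq_zero]
    exact natCast_ne_zero_of_pos_of_lt (p := p) (by omega) (by omega)
  exact (mul_eq_zero.1 h).resolve_left (mul_ne_zero (pow_ne_zero _ (X_ne_zero _))
    (mul_ne_zero hinv (pow_ne_zero _ (X_ne_zero _))))

end

theorem ker_Dmat_eq_map_ker_Bmat {p a : ℕ} (hchar : CharP k p)
    (ha : a < p - 1) :
    Submodule.map (pad k p a) (LinearMap.ker (Bmat k (2 * p - a - 2)).mulVecLin)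
      = LinearMap.ker (Dmat k p a).mulVecLin := by
  have hsplit : 2 * p = (2 * p - a - 2 + 1) + (a + 1) := by omega
  rw [Dmat_eq_submatrix_fromBlocks k hsplit, ker_mulVecLin_submatrix_equiv,
    ker_mulVecLin_fromBlocks_zero _ _ _ (Dmat_kernel_bottom_eq_zero (p := p) (by omega)),
    pad_eq_funLeft_comp k hsplit, Submodule.map_comp]
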